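/- For s ∈ [0,b) define ū_s(x) = e^{2u_s(0)/(r+1)}·(u_s(x) − u_s(0)). There exist constants K₁, K₂ > 0, independent of s, such that for every s ∈ [0,b) and every x ∈ (0, x_s/2] with u_s'(x) ≤ λ − 1: K₁·e^{2(u_s(0) − u_s(x))}·J(x)·(∫₀^x J(y) dy)^{−r/(r+1)} ≤ ū_s''(x) ≤ K₂·e^{2(u_s(0)/(r+1) + r·u_s(x_s/2)/(r+1) − u_s(x))}·J(x)·(∫₀^x J(y) dy)^{−r/(r+1)}. -/

import Mathlib

open Real Set Filter MeasureTheory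

/-- `J(x) = ∏ i sinh (cᵢ x)`. -/
noncomputable def Jfun (r : ℕ) (c : Fin r → ℝ) (x : ℝ) : ℝ :=
  ∏ i, Real.sinh (c i * x)

/-- `j = - log J`. -/
noncomputable def jfun (r : ℕ) (c : Fin r → ℝ) (x : ℝ) : ℝ :=
  - Real.log (Jfun r c x)

/-- A solution at level `s`: a smooth even function `u` with `u'' > 0`, whose derivative
maps `[0,∞)` onto `[0, λ - s)`, satisfying `u'' v(u') = e^{-2u} J` on `(0,∞)`. -/
def IsSolution (r : ℕ) (c : Fin r → ℝ) (v : ℝ → ℝ) (lam s : ℝ) (u : ℝ → ℝ) : Prop :=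
  ContDiff ℝ (⊤ : ℕ∞) u ∧ (∀ x, u (-x) = u x) ∧ (∀ x, 0 < deriv (deriv u) x) ∧
  deriv u '' Set.Ici (0:ℝ) = Set.Ico 0 (lam - s) ∧
  ∀ x, 0 < x → deriv (deriv u) x * v (deriv u x) = Real.exp (-(2 * u x)) * Jfun r c x

private lemma prod_cancel_key (J X Y Rρ Iρ Cr Cw : ℝ) (h1 : Cw ≠ 0) (h2 : Cr ≠ 0)
    (h3 : Rρ ≠ 0) (h4 : Iρ ≠ 0) :
    Cw⁻¹ * (Cr / Rρ) * X * J * Iρ⁻¹ * (Rρ * Y * Iρ / Cr * Cw) = X * Y * J := by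
  field_simp

theorem rescaled_second_derivative_bounds
    (r : ℕ) (hr : 1 ≤ r) (c : Fin r → ℝ) (hc : ∀ i, 0 < c i)
    (lam : ℝ) (hlam : lam = 1 + (1/2) * ∑ i, c i)
    (v : ℝ → ℝ) (m : ℕ) (A : ℝ) (hA : 0 < A) (a bk : Fin m → ℝ)
    (hbk : ∀ k, bk k ≠ 0)
    (hv : ∀ p, v p = A * p ^ r * ∏ k, (bk k - a k * p))
    (hvpos : ∀ p ∈ Set.Ioo (0:ℝ) lam, 0 < v p)
    (b : ℝ) (hb : b ∈ Set.Ioc (0:ℝ) 1)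
    (u : ℝ → ℝ → ℝ) (hu : ∀ s ∈ Set.Ico (0:ℝ) b, IsSolution r c v lam s (u s))
    (xs ms ys ds : ℝ → ℝ)
    (hxs : ∀ s ∈ Set.Ico (0:ℝ) b, xs s ∈ Set.Ioi (0:ℝ) ∧
      ∀ x ∈ Set.Ioi (0:ℝ), ms s ≤ 2 * u s x + jfun r c x)
    (hms : ∀ s ∈ Set.Ico (0:ℝ) b, ms s = 2 * u s (xs s) + jfun r c (xs s))
    (hds : ∀ s ∈ Set.Ico (0:ℝ) b, 0 ≤ ds s ∧
      Set.Icc (ys s - ds s) (ys s + ds s) =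
        {x : ℝ | 0 < x ∧ 2 * u s x + jfun r c x ≤ ms s + 1}) :
    ∃ K₁ > (0:ℝ), ∃ K₂ > (0:ℝ), ∀ s ∈ Set.Ico (0:ℝ) b, ∀ x : ℝ,
      0 < x → x ≤ xs s / 2 → deriv (u s) x ≤ lam - 1 →
      K₁ * Real.exp (2 * (u s 0 - u s x)) * Jfun r c x *
          (∫ y in (0:ℝ)..x, Jfun r c y) ^ (-(r:ℝ) / (r + 1)) ≤
        deriv (deriv (fun t => Real.exp (2 * u s 0 / (r + 1)) * (u s t - u s 0))) x ∧
      deriv (deriv (fun t => Real.exp (2 * u s 0 / (r + 1)) * (u s t - u s 0))) x ≤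
        K₂ * Real.exp (2 * (u s 0 / (r + 1) + r * u s (xs s / 2) / (r + 1) - u s x)) *
          Jfun r c x * (∫ y in (0:ℝ)..x, Jfun r c y) ^ (-(r:ℝ) / (r + 1)) := by
  have hFr : Nonempty (Fin r) := Fin.pos_iff_nonempty.mp hr
  have hr1 : (0:ℝ) < (r:ℝ) + 1 := by positivity
  set ρ : ℝ := (r:ℝ) / ((r:ℝ) + 1) with hρdef
  have hρ : 0 ≤ ρ := by positivity
  have hlam1 : (0:ℝ) < lam - 1 := by
    have : 0 < ∑ i, c i := Finset.sum_pos (fun i _ => hc i) Finset.univ_nonempty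
    rw [hlam]; linarith
  set w : ℝ → ℝ := fun p => A * ∏ k, (bk k - a k * p) with hwdef
  have hwcont : Continuous w := by
    apply continuous_const.mul
    exact continuous_finset_prod _ (fun k _ => continuous_const.sub (continuous_const.mul continuous_id))
  -- positivity of w on (0, lam)
  have hwIoo : ∀ q ∈ Ioo (0:ℝ) lam, 0 < w q := by
    intro q hq
    have h1 : 0 < A * q ^ r := mul_pos hA (pow_pos hq.1 r)
    have h2 := hvpos q hq
    rw [hv q] at h2
    have hPi : 0 < ∏ k, (bk k - a k * q) := by
      by_contra hneg
      push_neg at hneg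
      have : A * q ^ r * ∏ k, (bk k - a k * q) ≤ 0 := mul_nonpos_of_nonneg_of_nonpos h1.le hneg
      linarith
    exact mul_pos hA hPi
  have hwpos : ∀ p ∈ Icc (0:ℝ) (lam - 1), 0 < w p := by
    intro p hp
    rcases eq_or_lt_of_le hp.1 with h0 | h0
    · -- p = 0
      have hlim : Tendsto w (nhdsWithin 0 (Ioi 0)) (nhds (w 0)) :=
        (hwcont.tendsto 0).mono_left nhdsWithin_le_nhds
      have hev : ∀ᶠ q in nhdsWithin (0:ℝ) (Ioi 0), 0 ≤ w q := by
        have hIio : Iio lam ∈ nhdsWithin (0:ℝ) (Ioi 0) :=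
          mem_nhdsWithin_of_mem_nhds (isOpen_Iio.mem_nhds (by simp only [mem_Iio]; linarith))
        filter_upwards [self_mem_nhdsWithin, hIio] with q hq1 hq2
        exact (hwIoo q ⟨hq1, hq2⟩).le
      have h0le : 0 ≤ w 0 := ge_of_tendsto hlim hev
      have hne0 : w 0 ≠ 0 := by
        have : w 0 = A * ∏ k, bk k := by simp [hwdef]
        rw [this]
        exact mul_ne_zero (ne_of_gt hA) (Finset.prod_ne_zero_iff.mpr (fun k _ => hbk k))
      have : 0 < w 0 := lt_of_le_of_ne h0le (Ne.symm hne0)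
      rwa [← h0]
    · exact hwIoo p ⟨h0, by linarith [hp.2]⟩
  have hne : (Icc (0:ℝ) (lam - 1)).Nonempty := nonempty_Icc.mpr hlam1.le
  obtain ⟨p₁, hp₁, hmin⟩ := isCompact_Icc.exists_isMinOn hne hwcont.continuousOn
  obtain ⟨p₂, hp₂, hmax⟩ := isCompact_Icc.exists_isMaxOn hne hwcont.continuousOn
  set C₁ : ℝ := w p₁ with hC₁def
  set C₂ : ℝ := w p₂ with hC₂def
  have hC₁ : 0 < C₁ := hwpos p₁ hp₁
  have hC₂ : 0 < C₂ := hwpos p₂ hp₂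
  refine ⟨C₂⁻¹ * (C₁ / ((r:ℝ)+1)) ^ ρ, by positivity, C₁⁻¹ * (C₂ / ((r:ℝ)+1)) ^ ρ, by positivity, ?_⟩
  intro s hs x hx hxhalf hux
  obtain ⟨hcd, heven, hpp, himg, hode⟩ := hu s hs
  have hcdi : ContDiff ℝ (⊤:ℕ∞) (u s) := hcd.of_le (by simp)
  obtain ⟨hud, hcd'⟩ := contDiff_infty_iff_deriv.mp hcdi
  obtain ⟨hud', hcd''⟩ := contDiff_infty_iff_deriv.mp hcd'
  have hcont' : Continuous (deriv (u s)) := hud'.continuous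
  have hcont'' : Continuous (deriv (deriv (u s))) := hcd''.continuous
  have hsm : StrictMono (deriv (u s)) := strictMono_of_deriv_pos hpp
  have hlams : 0 < lam - s := by
    have h1 := hs.2; have h2 := hb.2; linarith
  have h0img : (0:ℝ) ∈ deriv (u s) '' Ici 0 := by
    rw [himg]; exact ⟨le_refl 0, hlams⟩
  obtain ⟨t, ht0, htv⟩ := h0img
  have h00 : deriv (u s) 0 ∈ Ico 0 (lam - s) := by
    rw [← himg]; exact mem_image_of_mem _ self_mem_Ici
  have hu'0 : deriv (u s) 0 = 0 := by
    rcases eq_or_lt_of_le (mem_Ici.mp ht0) with h | h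
    · rw [← h] at htv; exact htv
    · have hlt := hsm h
      rw [htv] at hlt
      exact absurd hlt (not_lt.mpr h00.1)
  have hu'nonneg : ∀ y, 0 ≤ y → 0 ≤ deriv (u s) y := fun y hy => hu'0 ▸ hsm.monotone hy
  have humono : MonotoneOn (u s) (Ici 0) := by
    apply monotoneOn_of_deriv_nonneg (convex_Ici 0) hud.continuous.continuousOn
      hud.differentiableOn
    intro y hy
    rw [interior_Ici] at hy
    exact hu'nonneg y hy.le
  have hxs0 : 0 < xs s := (hxs s hs).1
  -- J facts
  have hJcont : Continuous (Jfun r c) :=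
    continuous_finset_prod _ (fun i _ => Real.continuous_sinh.comp (continuous_const.mul continuous_id))
  have hJpos : ∀ y, 0 < y → 0 < Jfun r c y := fun y hy =>
    Finset.prod_pos (fun i _ => Real.sinh_pos_iff.mpr (mul_pos (hc i) hy))
  have hJ0 : Jfun r c 0 = 0 := by
    unfold Jfun
    exact Finset.prod_eq_zero (Finset.mem_univ (Classical.arbitrary (Fin r))) (by simp)
  have hJnonneg : ∀ y, 0 ≤ y → 0 ≤ Jfun r c y := by
    intro y hy
    rcases eq_or_lt_of_le hy with h | h
    · rw [← h, hJ0]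
    · exact (hJpos y h).le
  set I : ℝ := ∫ y in (0:ℝ)..x, Jfun r c y with hIdef
  have hIpos : 0 < I :=
    intervalIntegral.intervalIntegral_pos_of_pos_on (hJcont.intervalIntegrable 0 x)
      (fun y hy => hJpos y hy.1) hx
  have hu'x : 0 < deriv (u s) x := hu'0 ▸ hsm hx
  have hu'mem : ∀ y ∈ Icc (0:ℝ) x, deriv (u s) y ∈ Icc (0:ℝ) (lam - 1) := fun y hy =>
    ⟨hu'nonneg y hy.1, le_trans (hsm.monotone hy.2) hux⟩
  have hwlb : ∀ y ∈ Icc (0:ℝ) x, C₁ ≤ w (deriv (u s) y) := fun y hy =>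
    isMinOn_iff.mp hmin _ (hu'mem y hy)
  have hwub : ∀ y ∈ Icc (0:ℝ) x, w (deriv (u s) y) ≤ C₂ := fun y hy =>
    isMaxOn_iff.mp hmax _ (hu'mem y hy)
  -- the ODE in product form
  have hodeW : ∀ y, 0 < y →
      deriv (u s) y ^ r * deriv (deriv (u s)) y * w (deriv (u s) y)
        = Real.exp (-(2 * u s y)) * Jfun r c y := by
    intro y hy
    have h := hode y hy
    rw [hv (deriv (u s) y)] at h
    rw [← h, hwdef]; ring
  set g : ℝ → ℝ := fun y => deriv (u s) y ^ r * deriv (deriv (u s)) y with hgdef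
  have hgcont : Continuous g := (hcont'.pow r).mul hcont''
  have hgnonneg : ∀ y ∈ Icc (0:ℝ) x, 0 ≤ g y := fun y hy =>
    mul_nonneg (pow_nonneg (hu'nonneg y hy.1) r) (hpp y).le
  -- pointwise bounds
  have hptU : ∀ y ∈ Icc (0:ℝ) x, C₁ * g y ≤ Real.exp (-(2 * u s 0)) * Jfun r c y := by
    intro y hy
    rcases eq_or_lt_of_le hy.1 with h | h
    · rw [← h]
      simp [hgdef, hu'0, zero_pow (by omega : r ≠ 0), hJ0]
    · have heq := hodeW y h
      have hexp : Real.exp (-(2 * u s y)) ≤ Real.exp (-(2 * u s 0)) := by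
        apply Real.exp_le_exp.mpr
        have := humono self_mem_Ici (mem_Ici.mpr h.le) h.le
        linarith
      calc C₁ * g y ≤ w (deriv (u s) y) * g y :=
            mul_le_mul_of_nonneg_right (hwlb y hy) (hgnonneg y hy)
        _ = Real.exp (-(2 * u s y)) * Jfun r c y := by rw [← heq, hgdef]; ring
        _ ≤ Real.exp (-(2 * u s 0)) * Jfun r c y :=
            mul_le_mul_of_nonneg_right hexp (hJnonneg y h.le)
  have hptL : ∀ y ∈ Icc (0:ℝ) x, Real.exp (-(2 * u s x)) * Jfun r c y ≤ C₂ * g y := by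
    intro y hy
    rcases eq_or_lt_of_le hy.1 with h | h
    · rw [← h]
      simp [hgdef, hu'0, zero_pow (by omega : r ≠ 0), hJ0]
    · have heq := hodeW y h
      have hexp : Real.exp (-(2 * u s x)) ≤ Real.exp (-(2 * u s y)) := by
        apply Real.exp_le_exp.mpr
        have := humono (mem_Ici.mpr h.le) (mem_Ici.mpr (lt_of_lt_of_le h hy.2).le) hy.2
        linarith
      calc Real.exp (-(2 * u s x)) * Jfun r c y
          ≤ Real.exp (-(2 * u s y)) * Jfun r c y :=
            mul_le_mul_of_nonneg_right hexp (hJnonneg y h.le)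
        _ = w (deriv (u s) y) * g y := by rw [← heq, hgdef]; ring
        _ ≤ C₂ * g y := mul_le_mul_of_nonneg_right (hwub y hy) (hgnonneg y hy)
  -- FTC
  have hFTC : ∫ y in (0:ℝ)..x, g y = deriv (u s) x ^ (r+1) / ((r:ℝ)+1) := by
    have hF : ∀ y ∈ uIcc (0:ℝ) x,
        HasDerivAt (fun z => deriv (u s) z ^ (r+1) / ((r:ℝ)+1)) (g y) y := by
      intro y _
      have h1 : HasDerivAt (deriv (u s)) (deriv (deriv (u s)) y) y := (hud' y).hasDerivAt
      have h2 : HasDerivAt (fun z => deriv (u s) z ^ (r+1) / ((r:ℝ)+1))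
          (((r+1:ℕ):ℝ) * deriv (u s) y ^ (r+1-1) * deriv (deriv (u s)) y / ((r:ℝ)+1)) y :=
        (h1.pow (r+1)).div_const ((r:ℝ)+1)
      convert h2 using 1
      rw [hgdef]
      field_simp
      push_cast
      ring
    rw [intervalIntegral.integral_eq_sub_of_hasDerivAt hF (hgcont.intervalIntegrable 0 x)]
    rw [hu'0]
    rw [zero_pow (by omega : r + 1 ≠ 0)]
    ring
  -- integral bounds
  have hineq1 : C₁ * (deriv (u s) x ^ (r+1) / ((r:ℝ)+1)) ≤ Real.exp (-(2 * u s 0)) * I := by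
    calc C₁ * (deriv (u s) x ^ (r+1) / ((r:ℝ)+1)) = ∫ y in (0:ℝ)..x, C₁ * g y := by
          rw [intervalIntegral.integral_const_mul, hFTC]
      _ ≤ ∫ y in (0:ℝ)..x, Real.exp (-(2 * u s 0)) * Jfun r c y :=
          intervalIntegral.integral_mono_on hx.le
            ((continuous_const.mul hgcont).intervalIntegrable 0 x)
            ((continuous_const.mul hJcont).intervalIntegrable 0 x) hptU
      _ = Real.exp (-(2 * u s 0)) * I := intervalIntegral.integral_const_mul _ _
  have hineq2 : Real.exp (-(2 * u s x)) * I ≤ C₂ * (deriv (u s) x ^ (r+1) / ((r:ℝ)+1)) := by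
    calc Real.exp (-(2 * u s x)) * I
        = ∫ y in (0:ℝ)..x, Real.exp (-(2 * u s x)) * Jfun r c y :=
          (intervalIntegral.integral_const_mul _ _).symm
      _ ≤ ∫ y in (0:ℝ)..x, C₂ * g y :=
          intervalIntegral.integral_mono_on hx.le
            ((continuous_const.mul hJcont).intervalIntegrable 0 x)
            ((continuous_const.mul hgcont).intervalIntegrable 0 x) hptL
      _ = C₂ * (deriv (u s) x ^ (r+1) / ((r:ℝ)+1)) := by
          rw [intervalIntegral.integral_const_mul, hFTC]
  set P : ℝ := deriv (u s) x ^ (r+1) with hPdef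
  have hPpos : 0 < P := pow_pos hu'x _
  set EU : ℝ := Real.exp (-(2 * u s 0)) with hEUdef
  set EX : ℝ := Real.exp (-(2 * u s x)) with hEXdef
  have hPub : P ≤ (((r:ℝ)+1) * EU * I) / C₁ := by
    rw [le_div_iff₀ hC₁]
    calc P * C₁ = ((r:ℝ)+1) * (C₁ * (P / ((r:ℝ)+1))) := by field_simp
      _ ≤ ((r:ℝ)+1) * (EU * I) := mul_le_mul_of_nonneg_left hineq1 hr1.le
      _ = ((r:ℝ)+1) * EU * I := by ring
  have hPlb : (((r:ℝ)+1) * EX * I) / C₂ ≤ P := by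
    rw [div_le_iff₀ hC₂]
    calc ((r:ℝ)+1) * EX * I = ((r:ℝ)+1) * (EX * I) := by ring
      _ ≤ ((r:ℝ)+1) * (C₂ * (P / ((r:ℝ)+1))) := mul_le_mul_of_nonneg_left hineq2 hr1.le
      _ = P * C₂ := by field_simp
  -- u'(x)^r = P^ρ
  have hur : deriv (u s) x ^ r = P ^ ρ := by
    rw [hPdef, ← Real.rpow_natCast (deriv (u s) x) (r+1), ← Real.rpow_mul hu'x.le,
      ← Real.rpow_natCast (deriv (u s) x) r]
    congr 1
    rw [hρdef]
    push_cast
    field_simp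
  have hurub : deriv (u s) x ^ r ≤ ((((r:ℝ)+1) * EU * I) / C₁) ^ ρ := by
    rw [hur]; exact Real.rpow_le_rpow hPpos.le hPub hρ
  have hurlb : ((((r:ℝ)+1) * EX * I) / C₂) ^ ρ ≤ deriv (u s) x ^ r := by
    rw [hur]; exact Real.rpow_le_rpow (by positivity) hPlb hρ
  -- the rescaled second derivative
  set E : ℝ := Real.exp (2 * u s 0 / ((r:ℝ) + 1)) with hEdef
  have hD2 : deriv (deriv (fun t => Real.exp (2 * u s 0 / ((r:ℝ) + 1)) * (u s t - u s 0))) x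
      = E * deriv (deriv (u s)) x := by
    have h1 : deriv (fun t => Real.exp (2 * u s 0 / ((r:ℝ) + 1)) * (u s t - u s 0))
        = fun t => E * deriv (u s) t := by
      funext t
      exact (((hud t).hasDerivAt.sub_const (u s 0)).const_mul E).deriv
    rw [h1]
    exact (((hud' x).hasDerivAt).const_mul E).deriv
  set D : ℝ := deriv (u s) x ^ r * w (deriv (u s) x) with hDdef
  have hwx_lb : C₁ ≤ w (deriv (u s) x) := hwlb x ⟨hx.le, le_refl x⟩
  have hwx_ub : w (deriv (u s) x) ≤ C₂ := hwub x ⟨hx.le, le_refl x⟩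
  have hwx_pos : 0 < w (deriv (u s) x) := lt_of_lt_of_le hC₁ hwx_lb
  have hDpos : 0 < D := mul_pos (pow_pos hu'x r) hwx_pos
  have hux2 : deriv (deriv (u s)) x = EX * Jfun r c x / D := by
    have h := hode x hx
    rw [hv (deriv (u s) x)] at h
    rw [eq_div_iff (ne_of_gt hDpos), hDdef, hwdef]
    rw [← h]; ring
  have hJxpos : 0 < Jfun r c x := hJpos x hx
  -- exponent rewriting
  have hexpI : I ^ (-(r:ℝ) / ((r:ℝ) + 1)) = (I ^ ρ)⁻¹ := by
    rw [show -(r:ℝ) / ((r:ℝ)+1) = -ρ by rw [hρdef]; ring, Real.rpow_neg hIpos.le]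
  have hIρpos : 0 < I ^ ρ := Real.rpow_pos_of_pos hIpos ρ
  have hRρpos : 0 < ((r:ℝ)+1) ^ ρ := Real.rpow_pos_of_pos hr1 ρ
  have hC₁ρpos : 0 < C₁ ^ ρ := Real.rpow_pos_of_pos hC₁ ρ
  have hC₂ρpos : 0 < C₂ ^ ρ := Real.rpow_pos_of_pos hC₂ ρ
  constructor
  · -- lower bound
    rw [hD2, hux2, mul_div_assoc' E, le_div_iff₀ hDpos]
    have hDub : D ≤ ((((r:ℝ)+1) * EU * I) / C₁) ^ ρ * C₂ := by
      rw [hDdef]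
      apply mul_le_mul hurub hwx_ub hwx_pos.le (Real.rpow_nonneg (by positivity) ρ)
    calc C₂⁻¹ * (C₁ / ((r:ℝ)+1)) ^ ρ * Real.exp (2 * (u s 0 - u s x)) * Jfun r c x *
          I ^ (-(r:ℝ) / ((r:ℝ) + 1)) * D
        ≤ C₂⁻¹ * (C₁ / ((r:ℝ)+1)) ^ ρ * Real.exp (2 * (u s 0 - u s x)) * Jfun r c x *
          I ^ (-(r:ℝ) / ((r:ℝ) + 1)) * (((((r:ℝ)+1) * EU * I) / C₁) ^ ρ * C₂) := by
          apply mul_le_mul_of_nonneg_left hDub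
          rw [hexpI]
          positivity
      _ = E * (EX * Jfun r c x) := by
          have heu : EU ^ ρ = Real.exp (-(2 * u s 0) * ρ) := by
            rw [hEUdef, ← Real.exp_mul]
          have hee : Real.exp (2 * (u s 0 - u s x)) * Real.exp (-(2 * u s 0) * ρ)
              = E * EX := by
            rw [hEdef, hEXdef, ← Real.exp_add, ← Real.exp_add]
            congr 1
            rw [hρdef]
            field_simp
            ring
          rw [hexpI, Real.div_rpow (by positivity) hC₁.le,
            Real.mul_rpow (by positivity) hIpos.le,
            Real.mul_rpow hr1.le (Real.exp_pos _).le,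
            Real.div_rpow hC₁.le hr1.le, heu,
            prod_cancel_key _ _ _ _ _ _ _ (ne_of_gt hC₂) (ne_of_gt hC₁ρpos)
              (ne_of_gt hRρpos) (ne_of_gt hIρpos), hee]
          ring
  · -- upper bound
    rw [hD2, hux2, mul_div_assoc' E, div_le_iff₀ hDpos]
    have hDlb : ((((r:ℝ)+1) * EX * I) / C₂) ^ ρ * C₁ ≤ D := by
      rw [hDdef]
      exact mul_le_mul hurlb hwx_lb hC₁.le (pow_nonneg hu'x.le r)
    calc E * (EX * Jfun r c x)
        ≤ Real.exp (2 * (u s 0 / ((r:ℝ)+1) + (r:ℝ) * u s (xs s / 2) / ((r:ℝ)+1) - u s x))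
            * Real.exp (-(2 * u s x) * ρ) * Jfun r c x := by
          rw [show E * (EX * Jfun r c x) = (E * EX) * Jfun r c x by ring]
          apply mul_le_mul_of_nonneg_right _ hJxpos.le
          rw [hEdef, hEXdef, ← Real.exp_add, ← Real.exp_add]
          apply Real.exp_le_exp.mpr
          have huxub : u s x ≤ u s (xs s / 2) := by
            apply humono (mem_Ici.mpr hx.le) (mem_Ici.mpr (by linarith)) hxhalf
          rw [hρdef]
          have hRne : ((r:ℝ)+1) ≠ 0 := ne_of_gt hr1
          have hdiff : 2 * (u s 0 / ((r:ℝ)+1) + (r:ℝ) * u s (xs s / 2) / ((r:ℝ)+1) - u s x)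
                + -(2 * u s x) * ((r:ℝ)/((r:ℝ)+1))
                - (2 * u s 0 / ((r:ℝ)+1) + -(2 * u s x))
              = 2 * ((r:ℝ)/((r:ℝ)+1)) * (u s (xs s / 2) - u s x) := by
            field_simp
            ring
          have hnn : 0 ≤ 2 * ((r:ℝ)/((r:ℝ)+1)) * (u s (xs s / 2) - u s x) :=
            mul_nonneg (by positivity) (sub_nonneg.mpr huxub)
          linarith [hdiff, hnn]
      _ = (C₁⁻¹ * (C₂ / ((r:ℝ)+1)) ^ ρ) *
          Real.exp (2 * (u s 0 / ((r:ℝ)+1) + (r:ℝ) * u s (xs s / 2) / ((r:ℝ)+1) - u s x)) *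
          Jfun r c x * I ^ (-(r:ℝ) / ((r:ℝ) + 1)) * (((((r:ℝ)+1) * EX * I) / C₂) ^ ρ * C₁) := by
          have hex : EX ^ ρ = Real.exp (-(2 * u s x) * ρ) := by
            rw [hEXdef, ← Real.exp_mul]
          rw [hexpI, Real.div_rpow (by positivity) hC₂.le,
            Real.mul_rpow (by positivity) hIpos.le,
            Real.mul_rpow hr1.le (Real.exp_pos _).le,
            Real.div_rpow hC₂.le hr1.le, hex,
            prod_cancel_key _ _ _ _ _ _ _ (ne_of_gt hC₁) (ne_of_gt hC₂ρpos)
              (ne_of_gt hRρpos) (ne_of_gt hIρpos)]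
      _ ≤ (C₁⁻¹ * (C₂ / ((r:ℝ)+1)) ^ ρ) *
          Real.exp (2 * (u s 0 / ((r:ℝ)+1) + (r:ℝ) * u s (xs s / 2) / ((r:ℝ)+1) - u s x)) *
          Jfun r c x * I ^ (-(r:ℝ) / ((r:ℝ) + 1)) * D := by
          apply mul_le_mul_of_nonneg_left hDlb
          rw [hexpI]
          exact mul_nonneg (mul_nonneg (mul_nonneg (mul_nonneg (inv_nonneg.mpr hC₁.le)
            (Real.rpow_nonneg (by positivity) ρ)) (Real.exp_pos _).le) hJxpos.le)
            (inv_nonneg.mpr hIρpos.le)
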